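/- arXiv:2011.13255 — 6 statements merged into one kernel-verified Lean document; each statement's English description precedes it below -/
import Mathlib

section
/- Suppose there exist k ∈ ℤ⁺, matrices α_ℓ ∈ ℝ^{n×n} for ℓ = 0,…,k, and matrices b_ℓ ∈ ℝ^{n×m} for ℓ = 1,…,k+1 such that f̂^{k+1}(x,0) = Σ_{ℓ=0}^k α_ℓ f̂^ℓ(x,0) for all x, and f̂^ℓ(x,u) = f̂^ℓ(x,0) + b_ℓ u for all (x,u) and ℓ = 1,…,k+1. Then f̂^{k+2}(x,u) = f̂^{k+2}(x,0) + b u for some constant matrix b ∈ ℝ^{n×m}, namely b = Σ_{ℓ=0}^k α_ℓ b_{ℓ+1}. -/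
/-!
Since `fhat f (ℓ + 1) x u = fhat f ℓ (f x u) 0`, the linear recurrence for the free response,
applied at the point `f x u`, writes `fhat f (k + 2) x u` as `∑ α ℓ *ᵥ fhat f (ℓ + 1) x u`.
Each summand is affine in `u` with slope `α ℓ * b (ℓ + 1)`, and these slopes add up.
-/

open Matrix Finset

def fhat {V U : Type*} [Zero U] (f : V → U → V) : ℕ → V → U → V
  | 0, x, _ => x
  | 1, x, u => f x u
  | (ℓ + 2), x, u => f (fhat f (ℓ + 1) x u) 0

theorem fhat_succ {V U : Type*} [Zero U] (f : V → U → V) (ℓ : ℕ) (x : V) (u : U) :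
    fhat f (ℓ + 1) x u = fhat f ℓ (f x u) 0 := by
  induction ℓ with
  | zero => rfl
  | succ ℓ ih =>
    change f (fhat f (ℓ + 1) x u) 0 = fhat f (ℓ + 1) (f x u) 0
    rw [ih]
    cases ℓ <;> rfl

theorem fhat_add_two_eq_sum_of_recurrence {ι U R : Type*} [Zero U] [Fintype ι]
    [NonUnitalNonAssocSemiring R] (f : (ι → R) → U → ι → R) (α : ℕ → Matrix ι ι R) (k : ℕ)
    (hrec : ∀ x, fhat f (k + 1) x 0 = ∑ ℓ ∈ range (k + 1), α ℓ *ᵥ fhat f ℓ x 0)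
    (x : ι → R) (u : U) :
    fhat f (k + 2) x u = ∑ ℓ ∈ range (k + 1), α ℓ *ᵥ fhat f (ℓ + 1) x u := by
  rw [fhat_succ, hrec]
  simp only [fhat_succ]

theorem stmt1 {n m k : ℕ} (f : (Fin n → ℝ) → (Fin m → ℝ) → (Fin n → ℝ))
    (α : ℕ → Matrix (Fin n) (Fin n) ℝ) (b : ℕ → Matrix (Fin n) (Fin m) ℝ)
    (h1 : ∀ x, fhat f (k + 1) x 0 = ∑ ℓ ∈ range (k + 1), (α ℓ).mulVec (fhat f ℓ x 0))
    (h2 : ∀ ℓ, 1 ≤ ℓ → ℓ ≤ k + 1 → ∀ x u, fhat f ℓ x u = fhat f ℓ x 0 + (b ℓ).mulVec u) :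
    ∀ x u, fhat f (k + 2) x u
      = fhat f (k + 2) x 0 + (∑ ℓ ∈ range (k + 1), α ℓ * b (ℓ + 1)).mulVec u := by
  intro x u
  have hslope : ∀ ℓ ∈ range (k + 1), α ℓ *ᵥ fhat f (ℓ + 1) x u
      = α ℓ *ᵥ fhat f (ℓ + 1) x 0 + (α ℓ * b (ℓ + 1)) *ᵥ u := by
    intro ℓ hℓ
    rw [h2 (ℓ + 1) le_add_self (by simpa using hℓ), mulVec_add, mulVec_mulVec]
  rw [fhat_add_two_eq_sum_of_recurrence f α k h1, fhat_add_two_eq_sum_of_recurrence f α k h1,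
    sum_congr rfl hslope, sum_add_distrib, sum_mulVec]
end

section
/- Suppose there exist k ∈ ℤ⁺, matrices α_ℓ ∈ ℝ^{n×n} (ℓ = 0,…,k) and b_ℓ ∈ ℝ^{n×m} (ℓ = 1,…,k+1) such that f̂^{k+1}(x,0) = Σ_{ℓ=0}^k α_ℓ f̂^ℓ(x,0) for all x, and f̂^ℓ(x,u) = f̂^ℓ(x,0) + b_ℓ u for all (x,u), ℓ = 1,…,k+1. Then for every ℓ ≥ 1 there exists a constant matrix c_ℓ ∈ ℝ^{n×m} such that f̂^ℓ(x,u) = f̂^ℓ(x,0) + c_ℓ u for all (x,u). -/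
/-! Writing `g y = f y 0`, one has `f̂^{j+1}(x,u) = g^j (f x u)` and `f̂^j(x,0) = g^j x`, so the
recurrence `g^{k+1} = Σ α_ℓ g^ℓ` on states, applied to `f̂^t(x,u)`, propagates to
`f̂^{k+1+t}(x,u) = Σ_{ℓ ≤ k} α_ℓ f̂^{ℓ+t}(x,u)` for `t ≥ 1`. A linear combination of maps that are
affine in `u` with a constant matrix is again such a map, so strong induction on the horizon
extends the hypothesis from horizons `1, …, k+1` to all horizons. -/

open Matrix Finset

section Iterates

variable {V U : Type*} [Zero U] (f : V → U → V)

lemma fhat_succ_eq_iterate (j : ℕ) (x : V) (u : U) :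
    fhat f (j + 1) x u = (fun y => f y 0)^[j] (f x u) := by
  induction j with
  | zero => rfl
  | succ j ih => rw [Function.iterate_succ_apply', ← ih]; rfl

lemma fhat_zero_input (j : ℕ) (x : V) : fhat f j x 0 = (fun y => f y 0)^[j] x := by
  cases j with
  | zero => rfl
  | succ j => rw [fhat_succ_eq_iterate, ← Function.iterate_succ_apply]

lemma fhat_add {t : ℕ} (ht : 1 ≤ t) (ℓ : ℕ) (x : V) (u : U) :
    fhat f (ℓ + t) x u = (fun y => f y 0)^[ℓ] (fhat f t x u) := by
  obtain ⟨s, rfl⟩ := Nat.exists_eq_add_of_le' ht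
  rw [← add_assoc, fhat_succ_eq_iterate, fhat_succ_eq_iterate, Function.iterate_add_apply]

lemma fhat_add_eq_sum_of_recurrence [AddCommMonoid V] {k : ℕ} (A : ℕ → V → V)
    (hrec : ∀ x, fhat f (k + 1) x 0 = ∑ ℓ ∈ range (k + 1), A ℓ (fhat f ℓ x 0))
    {t : ℕ} (ht : 1 ≤ t) (x : V) (u : U) :
    fhat f (k + 1 + t) x u = ∑ j ∈ range (k + 1), A j (fhat f (j + t) x u) := by
  have hrec' := hrec (fhat f t x u)
  simp only [fhat_zero_input] at hrec'
  simp only [fhat_add f ht, hrec']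

end Iterates

section AffineInInput

variable {R : Type*} [Semiring R] {ι κ : Type*} [Fintype κ]

def IsAffineInInput (φ : (ι → R) → (κ → R) → (ι → R)) : Prop :=
  ∃ c : Matrix ι κ R, ∀ x u, φ x u = φ x 0 + c *ᵥ u

variable {φ ψ : (ι → R) → (κ → R) → (ι → R)}

lemma IsAffineInInput.zero : IsAffineInInput (0 : (ι → R) → (κ → R) → (ι → R)) :=
  ⟨0, fun _ _ => by simp⟩

lemma IsAffineInInput.add (hφ : IsAffineInInput φ) (hψ : IsAffineInInput ψ) :
    IsAffineInInput (φ + ψ) := by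
  obtain ⟨c, hc⟩ := hφ
  obtain ⟨d, hd⟩ := hψ
  refine ⟨c + d, fun x u => ?_⟩
  simp only [Pi.add_apply, hc x u, hd x u, add_mulVec]
  abel

lemma IsAffineInInput.mulVec_left [Fintype ι] (A : Matrix ι ι R) (hφ : IsAffineInInput φ) :
    IsAffineInInput fun x u => A *ᵥ φ x u := by
  obtain ⟨c, hc⟩ := hφ
  refine ⟨A * c, fun x u => ?_⟩
  show A *ᵥ φ x u = A *ᵥ φ x 0 + _
  rw [hc x u, mulVec_add, mulVec_mulVec]

lemma IsAffineInInput.sum {J : Type*} (s : Finset J) {φ : J → (ι → R) → (κ → R) → (ι → R)}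
    (hφ : ∀ j ∈ s, IsAffineInInput (φ j)) : IsAffineInInput (∑ j ∈ s, φ j) :=
  Finset.sum_induction _ IsAffineInInput (fun _ _ => IsAffineInInput.add) IsAffineInInput.zero hφ

end AffineInInput

theorem stmt2 {n m k : ℕ} (f : (Fin n → ℝ) → (Fin m → ℝ) → (Fin n → ℝ))
    (α : ℕ → Matrix (Fin n) (Fin n) ℝ) (b : ℕ → Matrix (Fin n) (Fin m) ℝ)
    (h1 : ∀ x, fhat f (k + 1) x 0 = ∑ ℓ ∈ range (k + 1), (α ℓ).mulVec (fhat f ℓ x 0))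
    (h2 : ∀ ℓ, 1 ≤ ℓ → ℓ ≤ k + 1 → ∀ x u, fhat f ℓ x u = fhat f ℓ x 0 + (b ℓ).mulVec u) :
    ∀ ℓ, 1 ≤ ℓ → ∃ c : Matrix (Fin n) (Fin m) ℝ,
      ∀ x u, fhat f ℓ x u = fhat f ℓ x 0 + c.mulVec u := by
  intro ℓ
  induction ℓ using Nat.strong_induction_on with
  | _ ℓ ih =>
    intro hℓ
    rcases le_or_gt ℓ (k + 1) with hle | hgt
    · exact ⟨b ℓ, h2 ℓ hℓ hle⟩
    obtain ⟨t, rfl⟩ := Nat.exists_eq_add_of_lt hgt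
    have hsum : fhat f (k + 1 + (t + 1)) =
        ∑ j ∈ range (k + 1), fun x u => α j *ᵥ fhat f (j + (t + 1)) x u := by
      ext x u : 2
      simp only [Finset.sum_apply]
      exact fhat_add_eq_sum_of_recurrence f (fun j v => α j *ᵥ v) h1 (Nat.le_add_left 1 t) x u
    show IsAffineInInput (fhat f (k + 1 + (t + 1)))
    rw [hsum]
    exact IsAffineInInput.sum _ fun j hj =>
      IsAffineInInput.mulVec_left (α j) (ih (j + (t + 1)) (by grind) (by omega))
end

section
/- Suppose there exist k ∈ ℤ⁺, α_ℓ ∈ ℝ^{n×n} (ℓ = 0,…,k) and b_ℓ ∈ ℝ^{n×m} (ℓ = 1,…,k+1) satisfying f̂^{k+1}(x,0) = Σ_{ℓ=0}^k α_ℓ f̂^ℓ(x,0) for all x and f̂^ℓ(x,u) = f̂^ℓ(x,0) + b_ℓ u for all (x,u), ℓ = 1,…,k+1. Define T : ℝⁿ → ℝ^{(k+1)n} by T(x) = (x, f̂^1(x,0), …, f̂^k(x,0)), A the block companion matrix with blocks I_n on the superdiagonal and last block row (α_0, …, α_k), B the stacked matrix (b_1; …; b_{k+1}), and C = [I_n,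 0]. Then T(f(x,u)) = A T(x) + B u and C T(x) = x for all (x,u). -/
/-
Feeding `f(x,u)` into the lift shifts time by one: `f̂^ℓ(f(x,u),0) = f̂^{ℓ+1}(x,u)`, which the
affine hypothesis splits as `f̂^{ℓ+1}(x,0) + b_{ℓ+1} u`. The identity blocks of `A` realise this
shift on the first `k` block rows, and on the last one the linear recurrence for `f̂^{k+1}(x,0)`
is exactly the block row `(α_0, …, α_k)`.
-/

open Matrix Finset

/-- The lifting map `T(x) = (x, f̂¹(x,0), …, f̂ᵏ(x,0))`, with block index `p.1`. -/
def Tlift {n m k : ℕ} (f : (Fin n → ℝ) → (Fin m → ℝ) → (Fin n → ℝ))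
    (x : Fin n → ℝ) : Fin (k + 1) × Fin n → ℝ :=
  fun p => fhat f p.1 x 0 p.2

/-- Block companion matrix: `I_n` blocks on the superdiagonal, last block row `(α_0,…,α_k)`. -/
def Acomp {n k : ℕ} (α : ℕ → Matrix (Fin n) (Fin n) ℝ) :
    Matrix (Fin (k + 1) × Fin n) (Fin (k + 1) × Fin n) ℝ :=
  fun p q =>
    if (p.1 : ℕ) < k then (if (q.1 : ℕ) = (p.1 : ℕ) + 1 ∧ q.2 = p.2 then 1 else 0)
    else α q.1 p.2 q.2

/-- Stacked input matrix `B = (b_1; …; b_{k+1})`. -/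
def Bstack {n m k : ℕ} (b : ℕ → Matrix (Fin n) (Fin m) ℝ) :
    Matrix (Fin (k + 1) × Fin n) (Fin m) ℝ :=
  fun p r => b ((p.1 : ℕ) + 1) p.2 r

/-- Projection matrix `C = [I_n, 0, …, 0]`. -/
def Cproj {n k : ℕ} : Matrix (Fin n) (Fin (k + 1) × Fin n) ℝ :=
  fun i q => if (q.1 : ℕ) = 0 ∧ q.2 = i then 1 else 0

section fhat

variable {V U : Type*} [Zero U] (f : V → U → V)

lemma fhat_succ_apply' (ℓ : ℕ) (x : V) : fhat f (ℓ + 1) x 0 = f (fhat f ℓ x 0) 0 := by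
  cases ℓ <;> rfl

lemma fhat_succ_apply (ℓ : ℕ) (x : V) (u : U) : fhat f (ℓ + 1) x u = fhat f ℓ (f x u) 0 := by
  induction ℓ with
  | zero => rfl
  | succ ℓ ih => rw [fhat_succ_apply', ← ih]; rfl

end fhat

section blocks

variable {n m k : ℕ}

lemma Acomp_mulVec_castSucc (α : ℕ → Matrix (Fin n) (Fin n) ℝ) (v : Fin (k + 1) × Fin n → ℝ)
    (i : Fin k) (j : Fin n) : (Acomp α *ᵥ v) (i.castSucc, j) = v (i.succ, j) := by
  rw [mulVec, dotProduct, Finset.sum_eq_single (i.succ, j)]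
  · simp [Acomp]
  · rintro ⟨l, j'⟩ - hne
    have hl : ¬ ((l : ℕ) = i + 1 ∧ j' = j) := fun ⟨hl, hj⟩ => hne (by ext <;> simp [hl, hj])
    simp [Acomp, hl]
  · simp

lemma Acomp_mulVec_last (α : ℕ → Matrix (Fin n) (Fin n) ℝ) (v : Fin (k + 1) × Fin n → ℝ)
    (j : Fin n) :
    (Acomp α *ᵥ v) (Fin.last k, j) = ∑ l : Fin (k + 1), (α l *ᵥ fun j' => v (l, j')) j := by
  simp [mulVec, dotProduct, Fintype.sum_prod_type, Acomp]

lemma Bstack_mulVec_apply (b : ℕ → Matrix (Fin n) (Fin m) ℝ) (u : Fin m → ℝ)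
    (i : Fin (k + 1)) (j : Fin n) : (Bstack b *ᵥ u) (i, j) = (b (i + 1) *ᵥ u) j :=
  rfl

lemma Cproj_mulVec (v : Fin (k + 1) × Fin n → ℝ) : Cproj *ᵥ v = fun i => v (0, i) := by
  funext i
  rw [mulVec, dotProduct, Finset.sum_eq_single (0, i)]
  · simp [Cproj]
  · rintro ⟨l, j⟩ - hne
    have hl : ¬ ((l : ℕ) = 0 ∧ j = i) := fun ⟨hl, hj⟩ => hne (by ext <;> simp [hl, hj])
    simp only [Cproj, hl, if_false, zero_mul]
  · simp

end blocks

theorem stmt3 {n m k : ℕ} (f : (Fin n → ℝ) → (Fin m → ℝ) → (Fin n → ℝ))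
    (α : ℕ → Matrix (Fin n) (Fin n) ℝ) (b : ℕ → Matrix (Fin n) (Fin m) ℝ)
    (h1 : ∀ x, fhat f (k + 1) x 0 = ∑ ℓ ∈ range (k + 1), (α ℓ).mulVec (fhat f ℓ x 0))
    (h2 : ∀ ℓ, 1 ≤ ℓ → ℓ ≤ k + 1 → ∀ x u, fhat f ℓ x u = fhat f ℓ x 0 + (b ℓ).mulVec u) :
    ∀ x u,
      Tlift (k := k) f (f x u)
        = (Acomp (k := k) α).mulVec (Tlift (k := k) f x) + (Bstack (k := k) b).mulVec u
      ∧ (Cproj (n := n) (k := k)).mulVec (Tlift (k := k) f x) = x := by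
  intro x u
  refine ⟨funext fun ⟨i, j⟩ => ?_, Cproj_mulVec _⟩
  have hi : (i : ℕ) + 1 ≤ k + 1 := Nat.succ_le_succ i.is_le
  rw [Pi.add_apply, Bstack_mulVec_apply, Tlift, ← fhat_succ_apply, h2 _ (Nat.le_add_left 1 _) hi,
    Pi.add_apply]
  congr 1
  rcases i.eq_castSucc_or_eq_last with ⟨i, rfl⟩ | rfl
  · rw [Acomp_mulVec_castSucc]
    rfl
  · rw [Acomp_mulVec_last, Fin.val_last, h1, Finset.sum_apply, ← Fin.sum_univ_eq_sum_range]
    rfl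
end

section
/- Suppose for every initial state x and control sequence u the solution of x(t+1) = f(x(t),u(t)) satisfies φ(t; x, u) = C φ̃(t; T(x), u) for all t, where φ̃ solves x̃(t+1) = A x̃(t) + B u(t) with x̃(0) = T(x). Then for all k ∈ ℤ⁺ and all (x,u): C A^k (A T(x) + B u − T(f(x,u))) = 0. -/
/-!
Feed the impulse control `(u₀, 0, 0, …)`. After one step the nonlinear system sits at `f x u₀`
with zero input, so by the immersion identity started at `f x u₀` its state at time `k + 1` is
`C Aᵏ T(f x u₀)`; the same identity started at `x` gives `C Aᵏ (A T(x) + B u₀)`.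
-/

open Matrix

def sol {n m : ℕ} (f : (Fin n → ℝ) → (Fin m → ℝ) → (Fin n → ℝ))
    (x : Fin n → ℝ) (u : ℕ → Fin m → ℝ) : ℕ → Fin n → ℝ
  | 0 => x
  | (t + 1) => f (sol f x u t) (u t)

def lsol {nt m : ℕ} (A : Matrix (Fin nt) (Fin nt) ℝ) (B : Matrix (Fin nt) (Fin m) ℝ)
    (xt : Fin nt → ℝ) (u : ℕ → Fin m → ℝ) : ℕ → Fin nt → ℝ
  | 0 => xt
  | (t + 1) => A.mulVec (lsol A B xt u t) + B.mulVec (u t)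

section Trajectories

variable {n m nt : ℕ}

lemma sol_succ_eq_sol_tail (f : (Fin n → ℝ) → (Fin m → ℝ) → (Fin n → ℝ))
    (x : Fin n → ℝ) (u : ℕ → Fin m → ℝ) (t : ℕ) :
    sol f x u (t + 1) = sol f (f x (u 0)) (fun s => u (s + 1)) t := by
  induction t with
  | zero => rfl
  | succ t ih => rw [sol, ih, sol]

lemma lsol_succ_eq_lsol_tail (A : Matrix (Fin nt) (Fin nt) ℝ) (B : Matrix (Fin nt) (Fin m) ℝ)
    (z : Fin nt → ℝ) (u : ℕ → Fin m → ℝ) (t : ℕ) :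
    lsol A B z u (t + 1) = lsol A B (A *ᵥ z + B *ᵥ u 0) (fun s => u (s + 1)) t := by
  induction t with
  | zero => rfl
  | succ t ih => rw [lsol, ih, lsol]

lemma lsol_zero_input (A : Matrix (Fin nt) (Fin nt) ℝ) (B : Matrix (Fin nt) (Fin m) ℝ)
    (z : Fin nt → ℝ) (t : ℕ) :
    lsol A B z 0 t = (A ^ t) *ᵥ z := by
  induction t with
  | zero => simp [lsol]
  | succ t ih => simp only [lsol, ih, Pi.zero_apply, mulVec_zero, add_zero, mulVec_mulVec, pow_succ']

end Trajectories

lemma tail_pi_single_zero {β : Type*} [Zero β] (b : β) :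
    (fun s : ℕ => Pi.single (M := fun _ => β) 0 b (s + 1)) = 0 := by
  funext s
  exact Pi.single_eq_of_ne (Nat.succ_ne_zero s) b

theorem stmt8 {n m nt : ℕ} (f : (Fin n → ℝ) → (Fin m → ℝ) → (Fin n → ℝ))
    (T : (Fin n → ℝ) → (Fin nt → ℝ))
    (A : Matrix (Fin nt) (Fin nt) ℝ) (B : Matrix (Fin nt) (Fin m) ℝ)
    (C : Matrix (Fin n) (Fin nt) ℝ)
    (himm : ∀ (x : Fin n → ℝ) (u : ℕ → Fin m → ℝ) (t : ℕ),
      sol f x u t = C.mulVec (lsol A B (T x) u t)) :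
    ∀ (k : ℕ) (x : Fin n → ℝ) (u : Fin m → ℝ),
      (C * A ^ k).mulVec (A.mulVec (T x) + B.mulVec u - T (f x u)) = 0 := by
  intro k x u
  set v : ℕ → Fin m → ℝ := Pi.single 0 u
  have hv₀ : v 0 = u := Pi.single_eq_same (M := fun _ => Fin m → ℝ) 0 u
  have from_x : sol f x v (k + 1) = (C * A ^ k) *ᵥ (A *ᵥ T x + B *ᵥ u) := by
    rw [himm, lsol_succ_eq_lsol_tail, tail_pi_single_zero, lsol_zero_input, hv₀, mulVec_mulVec]
  have from_fxu : sol f x v (k + 1) = (C * A ^ k) *ᵥ T (f x u) := by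
    rw [sol_succ_eq_sol_tail, tail_pi_single_zero, hv₀, himm, lsol_zero_input, mulVec_mulVec]
  rw [mulVec_sub, ← from_x, ← from_fxu, sub_self]
end

section
/- Suppose T, A, B, C, K satisfy T(f(x,u)) = A T(x) + B u, C T(x) = x for all (x,u). Let X̃_f = {x̃ ∈ ℝ^{ñ} : C(A+BK)^k x̃ ∈ X and K(A+BK)^k x̃ ∈ U for all k ≥ 0} and X_f = T^{-1}(X̃_f). Then X_f is invariant for the closed-loop system x⁺ = f(x, K T(x)) with admissible state and input: for any x ∈ X_f, letting g(x) = f(x, K T(x)), one has g(x) ∈ X_f, x ∈ X, and K T(x) ∈ U. -/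
/-! The lifted state `T x` evolves linearly under the closed loop, `T (g x) = (A + B K) T x`,
so the constraints at time `k` for `T (g x)` are the constraints at time `k + 1` for `T x`;
the constraints at time `0` say `x = C T x ∈ X` and `K T x ∈ U`. -/

open Matrix

theorem Matrix.pow_mulVec_mulVec_self {ι R : Type*} [Fintype ι] [DecidableEq ι] [Semiring R]
    (M : Matrix ι ι R) (v : ι → R) (k : ℕ) :
    (M ^ k) *ᵥ (M *ᵥ v) = (M ^ (k + 1)) *ᵥ v := by
  rw [mulVec_mulVec, ← pow_succ]

theorem lift_closedLoop_eq_mulVec {σ ι μ R : Type*} [Fintype ι] [Fintype μ] [Semiring R]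
    {f : σ → (μ → R) → σ} {T : σ → ι → R} {A : Matrix ι ι R} {B : Matrix ι μ R}
    (hTf : ∀ x u, T (f x u) = A *ᵥ T x + B *ᵥ u) (K : Matrix μ ι R) (x : σ) :
    T (f x (K *ᵥ T x)) = (A + B * K) *ᵥ T x := by
  rw [hTf, add_mulVec, mulVec_mulVec]

theorem stmt13 {n m nt : ℕ} (f : (Fin n → ℝ) → (Fin m → ℝ) → (Fin n → ℝ))
    (T : (Fin n → ℝ) → (Fin nt → ℝ))
    (A : Matrix (Fin nt) (Fin nt) ℝ) (B : Matrix (Fin nt) (Fin m) ℝ)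
    (C : Matrix (Fin n) (Fin nt) ℝ) (K : Matrix (Fin m) (Fin nt) ℝ)
    (X : Set (Fin n → ℝ)) (U : Set (Fin m → ℝ))
    (hTf : ∀ x u, T (f x u) = A.mulVec (T x) + B.mulVec u)
    (hCT : ∀ x, C.mulVec (T x) = x)
    (Xtf : Set (Fin nt → ℝ))
    (hXtf : Xtf = {xt | ∀ k : ℕ,
      C.mulVec (((A + B * K) ^ k).mulVec xt) ∈ X
      ∧ K.mulVec (((A + B * K) ^ k).mulVec xt) ∈ U})
    (Xf : Set (Fin n → ℝ)) (hXf : Xf = T ⁻¹' Xtf) :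
    ∀ x ∈ Xf, f x (K.mulVec (T x)) ∈ Xf ∧ x ∈ X ∧ K.mulVec (T x) ∈ U := by
  subst hXtf hXf
  intro x (hx : ∀ k : ℕ, C *ᵥ ((A + B * K) ^ k *ᵥ T x) ∈ X ∧ K *ᵥ ((A + B * K) ^ k *ᵥ T x) ∈ U)
  have hx₀ := hx 0
  rw [pow_zero, one_mulVec, hCT] at hx₀
  refine ⟨?_, hx₀⟩
  intro k
  rw [lift_closedLoop_eq_mulVec hTf, pow_mulVec_mulVec_self]
  exact hx (k + 1)
end

section
/- Suppose T, A, B, C satisfy T(f(x,u)) = A T(x) + B u and C T(x) = x for all (x,u), and let Q ⪰ 0, R ≻ 0. Then for any initial state x(0) and control sequence u, the nonlinear LQ cost Σ_{t=0}^{N} (x(t)ᵀ Q x(t) + u(t)ᵀ R u(t)) along x(t+1) = f(x(t),u(t)) equals the linear LQ cost Σ_{t=0}^{N} (x̃(t)ᵀ Cᵀ Q C x̃(t) + u(t)ᵀ R u(t)) along x̃(t+1) = A x̃(t) + B u(t) with x̃(0) = T(x(0)). -/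
open Matrix Finset

theorem lsol_eq_comp_sol {n m nt : ℕ} {f : (Fin n → ℝ) → (Fin m → ℝ) → (Fin n → ℝ)}
    {T : (Fin n → ℝ) → (Fin nt → ℝ)} {A : Matrix (Fin nt) (Fin nt) ℝ}
    {B : Matrix (Fin nt) (Fin m) ℝ} (hTf : ∀ x u, T (f x u) = A *ᵥ T x + B *ᵥ u)
    (x : Fin n → ℝ) (u : ℕ → Fin m → ℝ) (t : ℕ) :
    lsol A B (T x) u t = T (sol f x u t) := by
  induction t with
  | zero => rfl
  | succ t ih => rw [lsol, sol, hTf, ih]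

theorem dotProduct_transpose_mul_mul_mulVec {ι κ R : Type*} [Fintype ι] [Fintype κ]
    [CommSemiring R] (C : Matrix κ ι R) (Q : Matrix κ κ R) (v : ι → R) :
    v ⬝ᵥ (Cᵀ * Q * C) *ᵥ v = (C *ᵥ v) ⬝ᵥ Q *ᵥ (C *ᵥ v) := by
  rw [← mulVec_mulVec, ← mulVec_mulVec, dotProduct_mulVec, vecMul_transpose]

theorem stmt16_general {n m nt : ℕ} (f : (Fin n → ℝ) → (Fin m → ℝ) → (Fin n → ℝ))
    (T : (Fin n → ℝ) → (Fin nt → ℝ))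
    (A : Matrix (Fin nt) (Fin nt) ℝ) (B : Matrix (Fin nt) (Fin m) ℝ)
    (C : Matrix (Fin n) (Fin nt) ℝ)
    (Q : Matrix (Fin n) (Fin n) ℝ) (R : Matrix (Fin m) (Fin m) ℝ)
    (hTf : ∀ x u, T (f x u) = A.mulVec (T x) + B.mulVec u)
    (hCT : ∀ x, C.mulVec (T x) = x) :
    ∀ (x : Fin n → ℝ) (u : ℕ → Fin m → ℝ) (N : ℕ),
      ∑ t ∈ range (N + 1),
        (dotProduct (sol f x u t) (Q.mulVec (sol f x u t))
          + dotProduct (u t) (R.mulVec (u t)))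
      = ∑ t ∈ range (N + 1),
        (dotProduct (lsol A B (T x) u t) ((Cᵀ * Q * C).mulVec (lsol A B (T x) u t))
          + dotProduct (u t) (R.mulVec (u t))) := by
  intro x u N
  refine sum_congr rfl fun t _ => ?_
  rw [lsol_eq_comp_sol hTf, dotProduct_transpose_mul_mul_mulVec, hCT]

theorem stmt16 {n m nt : ℕ} (f : (Fin n → ℝ) → (Fin m → ℝ) → (Fin n → ℝ))
    (T : (Fin n → ℝ) → (Fin nt → ℝ))
    (A : Matrix (Fin nt) (Fin nt) ℝ) (B : Matrix (Fin nt) (Fin m) ℝ)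
    (C : Matrix (Fin n) (Fin nt) ℝ)
    (Q : Matrix (Fin n) (Fin n) ℝ) (R : Matrix (Fin m) (Fin m) ℝ)
    (hQ : Q.PosSemidef) (hR : R.PosDef)
    (hTf : ∀ x u, T (f x u) = A.mulVec (T x) + B.mulVec u)
    (hCT : ∀ x, C.mulVec (T x) = x) :
    ∀ (x : Fin n → ℝ) (u : ℕ → Fin m → ℝ) (N : ℕ),
      ∑ t ∈ range (N + 1),
        (dotProduct (sol f x u t) (Q.mulVec (sol f x u t))
          + dotProduct (u t) (R.mulVec (u t)))
      = ∑ t ∈ range (N + 1),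
        (dotProduct (lsol A B (T x) u t) ((Cᵀ * Q * C).mulVec (lsol A B (T x) u t))
          + dotProduct (u t) (R.mulVec (u t))) :=
  stmt16_general f T A B C Q R hTf hCT
end
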